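/- arXiv:1709.01714 — 2 statements merged into one kernel-verified Lean document; each statement's English description precedes it below -/
import Mathlib

section
/- Let G be a finite group. The matrix obtained from the character table of G (over ℂ) by removing the row corresponding to the trivial representation and the column corresponding to the conjugacy class of the identity element is nondegenerate (invertible). -/
/-!
Suppose a combination `ψ = ∑ vᵢ χᵢ` of the nontrivial irreducible characters vanishes at the
representatives of the nonidentity classes. Being a class function, `ψ` vanishes off `1`; being
orthogonal to the trivial character, it has total sum `0`, so `ψ 1 = 0` as well. Thus `ψ = 0`, and
the orthogonality relations make irreducible characters linearly independent, so `v = 0`: the rows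
of the matrix are linearly independent.
-/

open CategoryTheory

theorem eq_zero_of_sum_eq_zero_of_forall_ne_one {G M : Type*} [One G] [Fintype G]
    [AddCommMonoid M] {ψ : G → M} (hψ : ∀ g ≠ 1, ψ g = 0) (hsum : ∑ g, ψ g = 0) : ψ = 0 := by
  have h1 : ψ 1 = 0 := by
    rwa [Finset.sum_eq_single 1 (fun g _ hg => hψ g hg) (by simp)] at hsum
  funext g
  obtain rfl | hg := eq_or_ne g 1
  exacts [h1, hψ g hg]

namespace FDRep

variable {k G : Type*} [Field k] [Group G]

theorem char_eq_of_isConj (V : FDRep k G) {g h : G} (hgh : IsConj g h) :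
    V.character g = V.character h := by
  obtain ⟨u, rfl⟩ := isConj_iff.mp hgh
  exact (char_conj V g u).symm

variable [IsAlgClosed k] [Fintype G] [Invertible (Nat.card G : k)]

theorem sum_char_mul_char_inv_self (V : FDRep k G) [Simple V] :
    ∑ g, V.character g * V.character g⁻¹ = Nat.card G := by
  have h := char_orthonormal V V
  rw [if_pos ⟨Iso.refl V⟩, inv_mul_eq_iff_eq_mul₀ (isUnit_of_invertible _).ne_zero] at h
  simpa using h

theorem sum_char_mul_char_inv_of_ne (V W : FDRep k G) [Simple V] [Simple W]
    (hVW : V.character ≠ W.character) : ∑ g, V.character g * W.character g⁻¹ = 0 := by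
  have h := char_orthonormal V W
  rw [if_neg fun ⟨e⟩ => hVW (char_iso e),
    inv_mul_eq_iff_eq_mul₀ (isUnit_of_invertible _).ne_zero] at h
  simpa using h

theorem linearIndependent_character {ι : Type*} (V : ι → FDRep k G) [∀ i, Simple (V i)]
    (hV : Function.Injective fun i => (V i).character) :
    LinearIndependent k fun i => (V i).character := by
  refine .of_pairwise_dual_eq_zero_one _
    (fun i => ⅟(Nat.card G : k) • ∑ g, (V i).character g • LinearMap.proj g⁻¹) ?_ ?_
  · intro i j hij
    simp [sum_char_mul_char_inv_of_ne _ _ (hV.ne hij)]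
  · intro i
    simp only [LinearMap.smul_apply, LinearMap.coe_sum, Finset.sum_apply, LinearMap.proj_apply,
      smul_eq_mul, sum_char_mul_char_inv_self, invOf_mul_self]

theorem sum_character_eq_zero (V W : FDRep k G) [Simple V] [Simple W] (hW : W.character = 1)
    (hVW : V.character ≠ W.character) : ∑ g, V.character g = 0 := by
  simpa [hW] using sum_char_mul_char_inv_of_ne V W hVW

end FDRep

theorem stmt0_general (G : Type) [Group G] [Fintype G] (n : ℕ)
    (χ : Fin (n + 1) → G → ℂ) (c : Fin (n + 1) → G)
    (hχirr : ∀ i, ∃ V : FDRep ℂ G, Simple V ∧ V.character = χ i)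
    (hχinj : Function.Injective χ)
    (hχ0 : χ 0 = fun _ => 1)
    (hc0 : c 0 = 1)
    (hcsurj : ∀ g : G, ∃ i, IsConj g (c i)) :
    IsUnit (Matrix.of fun i j : Fin n => χ i.succ (c j.succ)) := by
  choose V hV hVχ using hχirr
  obtain rfl : (fun i => (V i).character) = χ := funext hVχ
  let _ : Invertible (Nat.card G : ℂ) :=
    invertibleOfNonzero (Nat.cast_ne_zero.mpr Nat.card_pos.ne')
  have hlin : LinearIndependent ℂ fun i : Fin n => (V i.succ).character :=
    (FDRep.linearIndependent_character V hχinj).comp Fin.succ (Fin.succ_injective n)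
  have hsum (i : Fin n) : ∑ g, (V i.succ).character g = 0 :=
    FDRep.sum_character_eq_zero _ (V 0) hχ0 (hχinj.ne (Fin.succ_ne_zero i))
  rw [← Matrix.linearIndependent_rows_iff_isUnit, Fintype.linearIndependent_iff]
  intro v hv
  refine Fintype.linearIndependent_iff.mp hlin v (eq_zero_of_sum_eq_zero_of_forall_ne_one ?_ ?_)
  · intro g hg
    obtain ⟨j, hj⟩ := hcsurj g
    cases j using Fin.cases with
    | zero => exact absurd (isConj_one_left.mp (hc0 ▸ hj)) hg
    | succ j => simpa [FDRep.char_eq_of_isConj _ hj] using congrFun hv j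
  · simp [Finset.sum_apply, Finset.sum_comm (γ := G), ← Finset.mul_sum, hsum]

/-- The character table of a finite group `G`, with the row of the trivial
representation and the column of the identity conjugacy class removed, is invertible.
Here `χ` enumerates the irreducible complex characters (with `χ 0` the trivial one)
and `c` enumerates representatives of the conjugacy classes (with `c 0 = 1`). -/
theorem stmt0 (G : Type) [Group G] [Fintype G] (n : ℕ)
    (χ : Fin (n + 1) → G → ℂ) (c : Fin (n + 1) → G)
    (hχirr : ∀ i, ∃ V : FDRep ℂ G, Simple V ∧ V.character = χ i)
    (hχinj : Function.Injective χ)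
    (hχsurj : ∀ V : FDRep ℂ G, Simple V → ∃ i, V.character = χ i)
    (hχ0 : χ 0 = fun _ => 1)
    (hc0 : c 0 = 1)
    (hcinj : ∀ i j, IsConj (c i) (c j) → i = j)
    (hcsurj : ∀ g : G, ∃ i, IsConj g (c i)) :
    IsUnit (Matrix.of fun i j : Fin n => χ i.succ (c j.succ)) :=
  stmt0_general G n χ c hχirr hχinj hχ0 hc0 hcsurj
end

section
/- Let G be a nontrivial finite subgroup of SL₂(ℂ) with standard character χ₀. Define, for each nontrivial irreducible character ρ and each element g ≠ 1 of G, the vector v_ρ ∈ ℂ^{G∖{1}} with entries v_ρ(g) = (1/√|G|)·√(χ₀(g) − 2)·ρ(g) (for a fixed choice of square root). Then for any two nontrivial irreducible characters ρ₁, ρ₂, the bilinear pairing Σ_{g≠1} v_{ρ₁}(g)·v_{ρ₂}(g⁻¹) equals ⟨χ₀·ρ₁, ρ₂⟩ − 2·δ_{ρ₁,ρ₂}. -/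
open CategoryTheory
open scoped Classical

/-!
For `g ≠ 1` the two square-root factors combine, by the conjugation-invariance of the choice, to
`(χ₀ g - 2) / |G|`; this expression vanishes at `g = 1` since `χ₀ 1 = tr 1 = 2`, so the sum may
be taken over all of `G`, where it splits as `⟨χ₀ ρ₁, ρ₂⟩ - 2 ⟨ρ₁, ρ₂⟩`, and the last pairing is
`δ_{ρ₁,ρ₂}` by orthogonality of irreducible characters. The bilinear pairing becomes the hermitian
one through `ρ(g⁻¹) = conj ρ(g)`: the operator of `g` satisfies `X ^ |G| - 1`, a squarefree
polynomial, so it is diagonalizable with roots of unity as eigenvalues.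
-/

open Module Polynomial LinearMap ComplexConjugate

namespace Module.End

variable {K V : Type*} [Field K] [AddCommGroup V] [Module K V]

lemma HasEigenvalue.pow_eq_one {f : End K V} {μ : K} (hμ : f.HasEigenvalue μ) {n : ℕ}
    (hf : f ^ n = 1) : μ ^ n = 1 := by
  obtain ⟨v, hv⟩ := hμ.exists_hasEigenvector
  refine smul_left_injective K hv.2 ?_
  simpa [hf] using (hv.pow_apply n).symm

lemma isSemisimple_of_pow_eq_one {f : End K V} {n : ℕ} (hn : (n : K) ≠ 0) (hf : f ^ n = 1) :
    f.IsSemisimple :=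
  isSemisimple_of_squarefree_aeval_eq_zero
    (separable_X_pow_sub_C (1 : K) hn one_ne_zero).squarefree
    (by simp [hf])

lemma trace_eq_sum_mul_finrank_eigenspace [FiniteDimensional K V] {f g : End K V}
    (hf : ⨆ μ, f.eigenspace μ = ⊤) (φ : K → K) (hg : ∀ μ, ∀ x ∈ f.eigenspace μ, g x = φ μ • x) :
    trace K V g = ∑ μ : f.Eigenvalues, φ μ * finrank K (f.eigenspace μ) := by
  classical
  have hint : DirectSum.IsInternal fun μ : f.Eigenvalues => f.eigenspace μ :=
    DirectSum.isInternal_ne_bot_iff.mpr <|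
      DirectSum.isInternal_submodule_of_iSupIndep_of_iSup_eq_top f.eigenspaces_iSupIndep hf
  have hmaps (μ : K) : Set.MapsTo g (f.eigenspace μ) (f.eigenspace μ) := fun x hx => by
    rw [SetLike.mem_coe, hg μ x hx]
    exact Submodule.smul_mem _ _ hx
  rw [trace_eq_sum_trace_restrict hint fun μ => hmaps μ]
  refine Finset.sum_congr rfl fun μ _ => ?_
  have hscalar : g.restrict (hmaps μ) = φ μ • 1 := by
    ext x
    exact hg μ x x.2
  rw [hscalar, map_smul, trace_one, smul_eq_mul]

end Module.End

lemma LinearMap.trace_eq_conj_trace_of_pow_eq_one {V : Type*} [AddCommGroup V] [Module ℂ V]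
    [FiniteDimensional ℂ V] {f g : Module.End ℂ V} {n : ℕ} (hn : n ≠ 0) (hf : f ^ n = 1)
    (hgf : g * f = 1) : trace ℂ V g = conj (trace ℂ V f) := by
  have htop :=
    (Module.End.isSemisimple_of_pow_eq_one (Nat.cast_ne_zero.mpr hn) hf).iSup_eigenspace_eq_top
  have hg (μ : ℂ) (x : V) (hx : x ∈ f.eigenspace μ) : g x = μ⁻¹ • x := by
    have hx' : μ • g x = x := by
      rw [← map_smul, ← Module.End.mem_eigenspace_iff.mp hx, ← Module.End.mul_apply, hgf,
        Module.End.one_apply]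
    rcases eq_or_ne μ 0 with rfl | hμ
    · rw [zero_smul] at hx'
      simp [← hx']
    · rwa [eq_inv_smul_iff₀ hμ]
  rw [Module.End.trace_eq_sum_mul_finrank_eigenspace htop _ hg,
    Module.End.trace_eq_sum_mul_finrank_eigenspace (g := f) htop (fun μ => μ)
      fun μ x hx => Module.End.mem_eigenspace_iff.mp hx, map_sum]
  refine Finset.sum_congr rfl fun μ _ => ?_
  have hμ : ‖(μ : ℂ)‖ = 1 :=
    Complex.norm_eq_one_of_pow_eq_one (Module.End.HasEigenvalue.pow_eq_one μ.2 hf) hn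
  rw [map_mul, map_natCast, Complex.inv_eq_conj hμ]

namespace FDRep

variable {G : Type*} [Group G]

lemma char_inv [Finite G] (V : FDRep ℂ G) (g : G) :
    V.character g⁻¹ = conj (V.character g) :=
  trace_eq_conj_trace_of_pow_eq_one (orderOf_pos g).ne'
    (by rw [← map_pow, pow_orderOf_eq_one, map_one])
    (by rw [← map_mul, inv_mul_cancel, map_one])

lemma card_inv_mul_sum_char_mul_char_inv [Fintype G] (V W : FDRep ℂ G) [Simple V] [Simple W] :
    (Fintype.card G : ℂ)⁻¹ * ∑ g : G, V.character g * W.character g⁻¹ =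
      if V.character = W.character then 1 else 0 := by
  have : Invertible (Nat.card G : ℂ) := invertibleOfNonzero (by simp)
  by_cases h : V.character = W.character
  · rw [if_pos h, ← h, ← Nat.card_eq_fintype_card, char_orthonormal, if_pos ⟨Iso.refl V⟩]
  · rw [if_neg h, ← Nat.card_eq_fintype_card, char_orthonormal,
      if_neg fun ⟨i⟩ => h (char_iso i)]

end FDRep

theorem stmt10_general (G : Subgroup (Matrix.SpecialLinearGroup (Fin 2) ℂ)) [Fintype G]
    (χ₀ : G → ℂ)
    (hχ₀ : ∀ g : G, χ₀ g =
      Matrix.trace ((g : Matrix.SpecialLinearGroup (Fin 2) ℂ) : Matrix (Fin 2) (Fin 2) ℂ))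
    (s : G → ℂ)
    (hsconj : ∀ g : G, g ≠ 1 → s g⁻¹ * s g = χ₀ g - 2)
    (ρ₁ ρ₂ : G → ℂ)
    (h₁ : ∃ V : FDRep ℂ G, Simple V ∧ V.character = ρ₁)
    (h₂ : ∃ V : FDRep ℂ G, Simple V ∧ V.character = ρ₂)
    (v : (G → ℂ) → G → ℂ)
    (hv : ∀ ρ (g : G), v ρ g = ((Real.sqrt (Fintype.card G) : ℂ))⁻¹ * s g * ρ g)
    (inner : (G → ℂ) → (G → ℂ) → ℂ)
    (hinner : ∀ α β, inner α β =
      (Fintype.card G : ℂ)⁻¹ * ∑ g : G, α g * starRingEnd ℂ (β g)) :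
    ∑ g ∈ Finset.univ.filter (fun g : G => g ≠ 1), v ρ₁ g * v ρ₂ g⁻¹
      = inner (χ₀ * ρ₁) ρ₂ - 2 * (if ρ₁ = ρ₂ then 1 else 0) := by
  obtain ⟨V₁, _, rfl⟩ := h₁
  obtain ⟨V₂, _, rfl⟩ := h₂
  set N : ℂ := (Fintype.card G : ℂ)
  have hsqrt : (Real.sqrt (Fintype.card G) : ℂ)⁻¹ * (Real.sqrt (Fintype.card G) : ℂ)⁻¹ = N⁻¹ := by
    rw [← mul_inv, ← Complex.ofReal_mul, Real.mul_self_sqrt (Nat.cast_nonneg _),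
      Complex.ofReal_natCast]
  have hterm (g : G) (hg : g ≠ 1) : v V₁.character g * v V₂.character g⁻¹ =
      N⁻¹ * ((χ₀ g - 2) * (V₁.character g * V₂.character g⁻¹)) := by
    rw [hv, hv, ← hsconj g hg, ← hsqrt]
    ring
  have hχ₀_one : χ₀ 1 = 2 := by
    rw [hχ₀, OneMemClass.coe_one, Matrix.SpecialLinearGroup.coe_one, Matrix.trace_one]
    norm_num
  calc ∑ g ∈ Finset.univ.filter (fun g : G => g ≠ 1), v V₁.character g * v V₂.character g⁻¹
      = ∑ g, N⁻¹ * ((χ₀ g - 2) * (V₁.character g * V₂.character g⁻¹)) := by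
        rw [Finset.filter_ne', Finset.sum_congr rfl fun g hg => hterm g (Finset.ne_of_mem_erase hg),
          Finset.sum_erase _ (by rw [hχ₀_one, sub_self, zero_mul, mul_zero])]
    _ = N⁻¹ * ∑ g, χ₀ g * V₁.character g * V₂.character g⁻¹
          - 2 * (N⁻¹ * ∑ g, V₁.character g * V₂.character g⁻¹) := by
        rw [Finset.mul_sum, Finset.mul_sum, Finset.mul_sum, ← Finset.sum_sub_distrib]
        exact Finset.sum_congr rfl fun g _ => by ring
    _ = _ := by
        rw [FDRep.card_inv_mul_sum_char_mul_char_inv, hinner]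
        simp [FDRep.char_inv]

/-- For a nontrivial finite subgroup `G ⊂ SL₂(ℂ)` with standard character `χ₀`, a fixed
conjugation-invariant choice of square roots `s g` of `χ₀ g - 2`, and the vectors
`v ρ g = (1/√|G|) s g ρ g`, the bilinear pairing of `v ρ₁` and `v ρ₂` is
`⟨χ₀·ρ₁, ρ₂⟩ - 2δ_{ρ₁,ρ₂}` for nontrivial irreducible characters `ρ₁, ρ₂`. -/
theorem stmt10 (G : Subgroup (Matrix.SpecialLinearGroup (Fin 2) ℂ)) [Fintype G]
    (hGnt : Nontrivial G)
    (χ₀ : G → ℂ)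
    (hχ₀ : ∀ g : G, χ₀ g =
      Matrix.trace ((g : Matrix.SpecialLinearGroup (Fin 2) ℂ) : Matrix (Fin 2) (Fin 2) ℂ))
    (s : G → ℂ)
    (hs : ∀ g : G, g ≠ 1 → s g ^ 2 = χ₀ g - 2)
    (hsconj : ∀ g : G, g ≠ 1 → s g⁻¹ * s g = χ₀ g - 2)
    (ρ₁ ρ₂ : G → ℂ)
    (h₁ : ∃ V : FDRep ℂ G, Simple V ∧ V.character = ρ₁)
    (h₂ : ∃ V : FDRep ℂ G, Simple V ∧ V.character = ρ₂)
    (hnt₁ : ρ₁ ≠ fun _ => 1) (hnt₂ : ρ₂ ≠ fun _ => 1)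
    (v : (G → ℂ) → G → ℂ)
    (hv : ∀ ρ (g : G), v ρ g = ((Real.sqrt (Fintype.card G) : ℂ))⁻¹ * s g * ρ g)
    (inner : (G → ℂ) → (G → ℂ) → ℂ)
    (hinner : ∀ α β, inner α β =
      (Fintype.card G : ℂ)⁻¹ * ∑ g : G, α g * starRingEnd ℂ (β g)) :
    ∑ g ∈ Finset.univ.filter (fun g : G => g ≠ 1), v ρ₁ g * v ρ₂ g⁻¹
      = inner (χ₀ * ρ₁) ρ₂ - 2 * (if ρ₁ = ρ₂ then 1 else 0) :=
  stmt10_general G χ₀ hχ₀ s hsconj ρ₁ ρ₂ h₁ h₂ v hv inner hinner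
end
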